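/- The multi-poly-Bernoulli numbers with all indices equal to 1 coincide with the higher-order Bernoulli numbers: B_n^{(1,1,...,1)} (r ones) = B_n^{(r)} for all n ≥ 0, where B_n^{(r)} are Bernoulli numbers of order r. -/

import Mathlib

open scoped BigOperators

/-- Coefficient of `x^N` in the multiple polylogarithm, with the index list
given in *reverse* order (`k_r` first). -/
noncomputable def mpolylogCoeff : List ℤ → ℕ → ℝ
  | [], 0 => 1
  | [], _ + 1 => 0
  | _ :: _, 0 => 0
  | k :: ks, (n + 1) =>
      (∑ j ∈ Finset.range (n + 1), mpolylogCoeff ks j) / ((n + 1 : ℕ) : ℝ) ^ k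

/-- Multiple polylogarithm `Li_{k_1,…,k_r}(x) = ∑_{0<n_1<⋯<n_r} x^{n_r}/(n_1^{k_1}⋯n_r^{k_r})`,
where the list `ks = [k_1,…,k_r]`. -/
noncomputable def mpolylog (ks : List ℤ) (x : ℝ) : ℝ :=
  ∑' n : ℕ, mpolylogCoeff ks.reverse n * x ^ n

/-!
Write `L_r = Li_{1,…,1}` with `r` ones. The recursion defining its coefficients reads
`(n+1) c_r(n+1) = ∑_{j ≤ n} c_{r-1}(j)`, i.e. `L_r' = L_{r-1} / (1 - x)`. The functions
`(-log(1 - x))^r / r!` satisfy the same recursion and vanish at `0` for `r ≥ 1`, so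
`L_r(x) = (-log(1 - x))^r / r!` for `|x| < 1`. At `x = 1 - e^{-t}` this is `t^r / r!`, so both
generating functions equal `(t/(e^t-1))^r` on a punctured neighbourhood of `0`, and the identity
theorem for power series identifies their coefficients.
-/

open Finset Filter Topology
open scoped Nat

lemma mpolylogCoeff_nonneg : ∀ (ks : List ℤ) (n : ℕ), 0 ≤ mpolylogCoeff ks n
  | [], 0 => zero_le_one
  | [], _ + 1 => le_rfl
  | _ :: _, 0 => le_rfl
  | k :: ks, n + 1 =>
    div_nonneg (sum_nonneg fun j _ => mpolylogCoeff_nonneg ks j) (zpow_nonneg (by positivity) k)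

lemma mpolylogCoeff_le_one : ∀ {ks : List ℤ}, (∀ k ∈ ks, 1 ≤ k) → ∀ n, mpolylogCoeff ks n ≤ 1
  | [], _, 0 => le_rfl
  | [], _, _ + 1 => zero_le_one
  | _ :: _, _, 0 => zero_le_one
  | k :: ks, hks, n + 1 => by
    have hn : (1 : ℝ) ≤ (n + 1 : ℕ) := by simp
    rw [mpolylogCoeff, div_le_one (by positivity)]
    calc ∑ j ∈ range (n + 1), mpolylogCoeff ks j
        ≤ ∑ _j ∈ range (n + 1), (1 : ℝ) :=
          sum_le_sum fun j _ => mpolylogCoeff_le_one (fun k hk => hks k (by simp [hk])) j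
      _ = ((n + 1 : ℕ) : ℝ) ^ (1 : ℤ) := by simp
      _ ≤ ((n + 1 : ℕ) : ℝ) ^ k := zpow_le_zpow_right₀ hn (hks k (by simp))

lemma succ_mul_mpolylogCoeff_one_cons_succ (ks : List ℤ) (n : ℕ) :
    ((n : ℝ) + 1) * mpolylogCoeff (1 :: ks) (n + 1) = ∑ j ∈ range (n + 1), mpolylogCoeff ks j := by
  rw [mpolylogCoeff, zpow_one, Nat.cast_succ, mul_div_cancel₀ _ (by positivity)]

lemma norm_mpolylogCoeff_le_one {ks : List ℤ} (hks : ∀ k ∈ ks, 1 ≤ k) (n : ℕ) :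
    ‖mpolylogCoeff ks n‖ ≤ 1 := by
  rw [Real.norm_of_nonneg (mpolylogCoeff_nonneg ks n)]
  exact mpolylogCoeff_le_one hks n

lemma summable_of_tsum_ne_zero {α β : Type*} [AddCommMonoid α] [TopologicalSpace α] {f : β → α}
    (h : ∑' b, f b ≠ 0) : Summable f :=
  not_not.mp (mt tsum_eq_zero_of_not_summable h)

section PowerSeries

variable {𝕜 : Type*} [RCLike 𝕜] {a : ℕ → 𝕜} {C : ℝ} {x : 𝕜}

lemma summable_norm_mul_pow_of_norm_le (ha : ∀ n, ‖a n‖ ≤ C) (hx : ‖x‖ < 1) :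
    Summable fun n => ‖a n * x ^ n‖ :=
  .of_nonneg_of_le (fun _ => norm_nonneg _)
    (fun n => by rw [norm_mul, norm_pow]; gcongr; exact ha n)
    ((summable_geometric_of_lt_one (norm_nonneg x) hx).mul_left C)

lemma hasDerivAt_tsum_mul_pow (ha : ∀ n, ‖a n‖ ≤ C) (hx : ‖x‖ < 1) :
    HasDerivAt (fun z => ∑' n, a n * z ^ n) (∑' n, (n + 1) * a (n + 1) * x ^ n) x := by
  obtain ⟨ρ, hxρ, hρ1⟩ := exists_between hx
  have hρ : ‖ρ‖ < 1 := by rwa [Real.norm_of_nonneg ((norm_nonneg x).trans hxρ.le)]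
  have hu : Summable fun n : ℕ => C * (n * ρ ^ (n - 1)) := by
    refine .mul_left C ((summable_nat_add_iff 1).mp ?_)
    simpa [add_mul] using (summable_pow_mul_geometric_of_norm_lt_one 1 hρ).add
      (summable_geometric_of_norm_lt_one hρ)
  have hbound : ∀ n, ∀ y ∈ Metric.ball (0 : 𝕜) ρ,
      ‖a n * (n * y ^ (n - 1))‖ ≤ C * (n * ρ ^ (n - 1)) := fun n y hy => by
    rw [mem_ball_zero_iff] at hy
    rw [norm_mul, norm_mul, norm_pow, RCLike.norm_natCast]
    gcongr
    · exact (norm_nonneg _).trans (ha 0)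
    · exact ha n
  have hxball : x ∈ Metric.ball (0 : 𝕜) ρ := mem_ball_zero_iff.mpr hxρ
  have hderiv := hasDerivAt_tsum_of_isPreconnected hu Metric.isOpen_ball
    (convex_ball (0 : 𝕜) ρ).isPreconnected (fun n y _ => (hasDerivAt_pow n y).const_mul (a n))
    hbound hxball (summable_norm_mul_pow_of_norm_le ha hx).of_norm hxball
  rw [(Summable.of_norm_bounded hu (hbound · x hxball)).tsum_eq_zero_add] at hderiv
  refine hderiv.congr_deriv ?_
  simp only [Nat.cast_zero, zero_mul, mul_zero, zero_add, Nat.add_sub_cancel, Nat.cast_succ]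
  exact tsum_congr fun n => by ring

lemma tsum_sum_range_mul_pow (ha : ∀ n, ‖a n‖ ≤ C) (hx : ‖x‖ < 1) :
    ∑' n, (∑ j ∈ range (n + 1), a j) * x ^ n = (∑' n, a n * x ^ n) * (1 - x)⁻¹ := by
  have hgeom : Summable fun n => ‖x ^ n‖ := by
    simpa only [norm_pow] using summable_geometric_of_lt_one (norm_nonneg x) hx
  rw [← tsum_geometric_of_norm_lt_one hx, tsum_mul_tsum_eq_tsum_sum_range_of_summable_norm (R := 𝕜)
    (summable_norm_mul_pow_of_norm_le ha hx) hgeom]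
  refine tsum_congr fun n => ?_
  rw [sum_mul]
  refine sum_congr rfl fun j hj => ?_
  rw [mul_assoc, ← pow_add, Nat.add_sub_cancel' (Nat.lt_succ_iff.mp (mem_range.mp hj))]

end PowerSeries

section IdentityTheorem

variable {𝕜 : Type*} [NontriviallyNormedField 𝕜] [CompleteSpace 𝕜] {a b : ℕ → 𝕜}

lemma hasFPowerSeriesAt_tsum_mul_pow (ha : ∃ t ≠ 0, Summable fun n => a n * t ^ n) :
    HasFPowerSeriesAt (fun z => ∑' n, a n * z ^ n)
      (FormalMultilinearSeries.ofScalars 𝕜 a) 0 := by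
  obtain ⟨t, ht, hsum⟩ := ha
  have hradius : (‖t‖₊ : ENNReal) ≤ (FormalMultilinearSeries.ofScalars 𝕜 a).radius := by
    refine FormalMultilinearSeries.le_radius_of_tendsto _ (l := 0) ?_
    simpa [FormalMultilinearSeries.ofScalars_norm, norm_mul, norm_pow]
      using hsum.tendsto_atTop_zero.norm
  have hpos : 0 < (FormalMultilinearSeries.ofScalars 𝕜 a).radius :=
    lt_of_lt_of_le (by simpa using ht) hradius
  have := ((FormalMultilinearSeries.ofScalars 𝕜 a).hasFPowerSeriesOnBall hpos).hasFPowerSeriesAt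
  simpa [← FormalMultilinearSeries.ofScalarsSum.eq_def,
    FormalMultilinearSeries.ofScalarsSum_eq_tsum] using this

lemma eq_of_frequently_tsum_mul_pow_eq (ha : ∃ t ≠ 0, Summable fun n => a n * t ^ n)
    (hb : ∃ t ≠ 0, Summable fun n => b n * t ^ n)
    (h : ∃ᶠ t in 𝓝[≠] 0, ∑' n, a n * t ^ n = ∑' n, b n * t ^ n) : a = b := by
  have hpa := hasFPowerSeriesAt_tsum_mul_pow ha
  have hpb := hasFPowerSeriesAt_tsum_mul_pow hb
  rw [hpa.analyticAt.frequently_eq_iff_eventually_eq hpb.analyticAt] at h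
  exact FormalMultilinearSeries.ofScalars_series_injective 𝕜 𝕜
    (hpa.eq_formalMultilinearSeries_of_eventually hpb h)

end IdentityTheorem

lemma hasDerivAt_neg_log_one_sub_pow_succ_div_factorial (r : ℕ) {y : ℝ} (hy : y < 1) :
    HasDerivAt (fun z => (-Real.log (1 - z)) ^ (r + 1) / (r + 1)!)
      ((-Real.log (1 - y)) ^ r / r ! * (1 - y)⁻¹) y := by
  have hlog : HasDerivAt (fun z => -Real.log (1 - z)) (1 - y)⁻¹ y := by
    refine (((hasDerivAt_id y).const_sub 1).log (sub_ne_zero.mpr hy.ne')).neg.congr_deriv ?_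
    simp [neg_div]
  refine ((hlog.pow (r + 1)).div_const _).congr_deriv ?_
  rw [Nat.add_sub_cancel, Nat.factorial_succ]
  push_cast
  field_simp

lemma hasDerivAt_tsum_mpolylogCoeff_one_cons {ks : List ℤ} (hks : ∀ k ∈ ks, 1 ≤ k) {x : ℝ}
    (hx : |x| < 1) :
    HasDerivAt (fun z => ∑' n, mpolylogCoeff (1 :: ks) n * z ^ n)
      ((∑' n, mpolylogCoeff ks n * x ^ n) * (1 - x)⁻¹) x := by
  have hks' : ∀ k ∈ 1 :: ks, 1 ≤ k := by simpa using hks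
  refine (hasDerivAt_tsum_mul_pow (norm_mpolylogCoeff_le_one hks') hx).congr_deriv ?_
  simp_rw [succ_mul_mpolylogCoeff_one_cons_succ]
  exact tsum_sum_range_mul_pow (norm_mpolylogCoeff_le_one hks) hx

theorem mpolylog_replicate_one (r : ℕ) {x : ℝ} (hx : |x| < 1) :
    mpolylog (List.replicate r 1) x = (-Real.log (1 - x)) ^ r / r ! := by
  rw [mpolylog, List.reverse_replicate]
  induction r generalizing x with
  | zero =>
    rw [tsum_eq_single 0 fun n hn => ?_]
    · simp [mpolylogCoeff]
    · obtain ⟨m, rfl⟩ := Nat.exists_eq_succ_of_ne_zero hn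
      simp [mpolylogCoeff]
  | succ r ih =>
    have hball : ∀ y ∈ Metric.ball (0 : ℝ) 1, |y| < 1 := fun y hy => by simpa using hy
    have hLi : ∀ y ∈ Metric.ball (0 : ℝ) 1, HasDerivAt
        (fun z => ∑' n, mpolylogCoeff (List.replicate (r + 1) 1) n * z ^ n)
        ((-Real.log (1 - y)) ^ r / r ! * (1 - y)⁻¹) y := fun y hy => by
      rw [← ih (hball y hy)]
      exact hasDerivAt_tsum_mpolylogCoeff_one_cons (fun k hk => (List.eq_of_mem_replicate hk).ge)
        (hball y hy)
    have hlog : ∀ y ∈ Metric.ball (0 : ℝ) 1, HasDerivAt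
        (fun z => (-Real.log (1 - z)) ^ (r + 1) / (r + 1)!)
        ((-Real.log (1 - y)) ^ r / r ! * (1 - y)⁻¹) y := fun y hy =>
      hasDerivAt_neg_log_one_sub_pow_succ_div_factorial r (abs_lt.mp (hball y hy)).2
    refine Metric.isOpen_ball.eqOn_of_deriv_eq (convex_ball (0 : ℝ) 1).isPreconnected
      (fun y hy => (hLi y hy).differentiableAt.differentiableWithinAt)
      (fun y hy => (hlog y hy).differentiableAt.differentiableWithinAt)
      (fun y hy => (hLi y hy).deriv.trans (hlog y hy).deriv.symm)
      (Metric.mem_ball_self one_pos) ?_ (by simpa using hx)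
    rw [tsum_eq_single 0 fun n hn => by simp [hn]]
    simp [List.replicate_succ, mpolylogCoeff]

lemma mpolylog_replicate_one_one_sub_exp_neg (r : ℕ) {t : ℝ} (ht : -Real.log 2 < t) :
    mpolylog (List.replicate r 1) (1 - Real.exp (-t)) = t ^ r / r ! := by
  have hexp : Real.exp (-t) < 2 := by
    rw [← Real.exp_log two_pos]
    exact Real.exp_lt_exp.mpr (by linarith)
  have hx : |1 - Real.exp (-t)| < 1 :=
    abs_lt.mpr ⟨by linarith, by linarith [Real.exp_pos (-t)]⟩
  rw [mpolylog_replicate_one r hx, sub_sub_cancel, Real.log_exp, neg_neg]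

theorem multiPolyBernoulli_ones_eq_higher_order_general (r : ℕ)
    (B Br : ℕ → ℝ) (ε : ℝ) (hε : 0 < ε)
    (hB : ∀ t : ℝ, 0 < |t| → |t| < ε →
      (Nat.factorial r : ℝ) * mpolylog (List.replicate r 1) (1 - Real.exp (-t)) /
          (Real.exp t - 1) ^ r =
        ∑' n : ℕ, B n * t ^ n / (Nat.factorial n : ℝ))
    (hBr : ∀ t : ℝ, 0 < |t| → |t| < ε →
      (t / (Real.exp t - 1)) ^ r = ∑' n : ℕ, Br n * t ^ n / (Nat.factorial n : ℝ))
    (n : ℕ) :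
    B n = Br n := by
  have hδ : 0 < min ε (Real.log 2) := lt_min hε (Real.log_pos one_lt_two)
  have hseries : ∀ᶠ t in 𝓝[≠] (0 : ℝ),
      ∑' m, B m / m ! * t ^ m = (t / (Real.exp t - 1)) ^ r ∧
      ∑' m, Br m / m ! * t ^ m = (t / (Real.exp t - 1)) ^ r ∧
      (t / (Real.exp t - 1)) ^ r ≠ 0 := by
    filter_upwards [self_mem_nhdsWithin, nhdsWithin_le_nhds (Metric.ball_mem_nhds 0 hδ)]
      with t (ht : t ≠ 0) htδ
    rw [mem_ball_zero_iff, Real.norm_eq_abs, lt_min_iff] at htδ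
    have ht0 : 0 < |t| := abs_pos.mpr ht
    simp_rw [← mul_div_right_comm]
    rw [← hB t ht0 htδ.1, ← hBr t ht0 htδ.1,
      mpolylog_replicate_one_one_sub_exp_neg r (by linarith [neg_abs_le t]),
      mul_div_cancel₀ _ (Nat.cast_ne_zero.mpr (Nat.factorial_ne_zero r)), ← div_pow]
    have hexp : Real.exp t - 1 ≠ 0 := sub_ne_zero.mpr (mt (Real.exp_eq_one_iff t).mp ht)
    exact ⟨rfl, rfl, pow_ne_zero r (div_ne_zero ht hexp)⟩
  -- A non-summable `tsum` is `0`, so the non-vanishing of `(t/(e^t-1))^r` gives summability.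
  obtain ⟨t, hsum, ht⟩ := (hseries.and self_mem_nhdsWithin).exists
  have hcoeff := eq_of_frequently_tsum_mul_pow_eq
    ⟨t, ht, summable_of_tsum_ne_zero (hsum.1 ▸ hsum.2.2)⟩
    ⟨t, ht, summable_of_tsum_ne_zero (hsum.2.1 ▸ hsum.2.2)⟩
    (hseries.mono fun _ h => h.1.trans h.2.1.symm).frequently
  simpa [Nat.factorial_ne_zero] using congrFun hcoeff n

/-- If `B n = B_n^{(1,…,1)}` (r ones) are the multi-poly-Bernoulli numbers, defined by
`r! Li_{1,…,1}(1-e^{-t})/(e^t-1)^r = ∑_n B n · t^n/n!`, and `Br n = B_n^{(r)}` are the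
Bernoulli numbers of order `r`, defined by `(t/(e^t-1))^r = ∑_n Br n · t^n/n!`,
then `B n = Br n` for all `n`. -/
theorem multiPolyBernoulli_ones_eq_higher_order (r : ℕ) (hr : 0 < r)
    (B Br : ℕ → ℝ) (ε : ℝ) (hε : 0 < ε)
    (hB : ∀ t : ℝ, 0 < |t| → |t| < ε →
      (Nat.factorial r : ℝ) * mpolylog (List.replicate r 1) (1 - Real.exp (-t)) /
          (Real.exp t - 1) ^ r =
        ∑' n : ℕ, B n * t ^ n / (Nat.factorial n : ℝ))
    (hBr : ∀ t : ℝ, 0 < |t| → |t| < ε →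
      (t / (Real.exp t - 1)) ^ r = ∑' n : ℕ, Br n * t ^ n / (Nat.factorial n : ℝ))
    (n : ℕ) :
    B n = Br n :=
  multiPolyBernoulli_ones_eq_higher_order_general r B Br ε hε hB hBr n
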